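/- arXiv:1104.2301 — 2 statements merged into one kernel-verified Lean document; each statement's English description precedes it below -/
import Mathlib

section
/- Let (Γ, v) have the unique simple path property with spanning tree T, and let C be a strongly connected component of Γ containing at least one edge. Then C equals the union of the loops lp(e) = [τ(e), ι(e)]·e over all bold arrows e (edges of Γ not in T) contained in C, where [τ(e), ι(e)] denotes the geodesic in T. -/
structure DGraph : Type 1 where
  V : Type
  E : Type
  ι : E → V
  τ : E → V

namespace DGraph

/-- A directed path from `u` to `w` given by its list of edges. -/
inductive Path (G : DGraph) : G.V → G.V → List G.E → Prop
  | nil (v : G.V) : Path G v v []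
  | cons (e : G.E) {w : G.V} {p : List G.E} :
      Path G (G.τ e) w p → Path G (G.ι e) w (e :: p)

/-- The list of vertices visited by a path `p` starting at `u`. -/
def verts (G : DGraph) (u : G.V) (p : List G.E) : List G.V :=
  u :: p.map G.τ

/-- A simple directed path: a path visiting no vertex twice. -/
def SimplePath (G : DGraph) (u w : G.V) (p : List G.E) : Prop :=
  G.Path u w p ∧ (G.verts u p).Nodup

/-- `w` is reachable from `u` by a directed path. -/
def Reach (G : DGraph) (u w : G.V) : Prop := ∃ p, G.Path u w p

/-- A graph is rooted at `v` if every vertex is reachable from `v`. -/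
def Rooted (G : DGraph) (v : G.V) : Prop := ∀ w, G.Reach v w

end DGraph


namespace DGraph

/-- A directed path from `u` to `w` all of whose edges lie in `ES`. -/
def PathIn (G : DGraph) (ES : Set G.E) (u w : G.V) (p : List G.E) : Prop :=
  G.Path u w p ∧ ∀ e ∈ p, e ∈ ES

/-- A directed rooted subtree of `G` rooted at `v`, given by a vertex set `VS`
and an edge set `ES`: it is a subgraph containing `v` in which every vertex is
reached from `v` by a unique directed path. -/
def IsRootedSubtree (G : DGraph) (v : G.V) (VS : Set G.V) (ES : Set G.E) : Prop :=
  v ∈ VS ∧ (∀ e ∈ ES, G.ι e ∈ VS ∧ G.τ e ∈ VS) ∧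
    ∀ w ∈ VS, ∃! p : List G.E, G.PathIn ES v w p

/-- A directed spanning tree of `G` rooted at `v`. -/
def IsSpanningTree (G : DGraph) (v : G.V) (ES : Set G.E) : Prop :=
  G.IsRootedSubtree v Set.univ ES

/-!
Under the unique simple path property the target of a bold arrow `e` lies on the tree path to
`ι(e)`: otherwise that tree path followed by `e` would be a second simple path to `τ(e)`. So the
tree path to `ι(e)` is the tree path to `τ(e)` followed by the geodesic of `lp(e)`. For a tree
edge `f`, tree edges therefore never lead out of the subtree below `f`, and a walk that starts
below `f` and ends outside it leaves through a bold arrow whose loop contains `f`. Applied to a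
walk inside `C` from `τ(f)` back to `ι(f)`, this puts every edge of `C` on a loop inside `C`;
every vertex of `C` is the target of an edge of `C`, hence lies on such a loop as well.
-/

variable {G : DGraph}

lemma verts_cons (x : G.V) (e : G.E) (p : List G.E) :
    G.verts x (e :: p) = x :: G.verts (G.τ e) p := rfl

lemma verts_append (x : G.V) (p q : List G.E) :
    G.verts x (p ++ q) = G.verts x p ++ q.map G.τ := by
  simp [verts]

namespace Path

lemma append {x y z : G.V} {p q : List G.E} (hp : G.Path x y p) (hq : G.Path y z q) :
    G.Path x z (p ++ q) := by
  induction hp with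
  | nil => exact hq
  | cons e _ ih => exact .cons e (ih hq)

lemma eq_of_nil {x y : G.V} (h : G.Path x y []) : x = y := by
  cases h; rfl

lemma of_append {x z : G.V} {p q : List G.E} (h : G.Path x z (p ++ q)) :
    ∃ m, G.Path x m p ∧ G.Path m z q := by
  induction p generalizing x with
  | nil => exact ⟨x, .nil x, h⟩
  | cons e p ih =>
    rw [List.cons_append] at h
    cases h with
    | cons _ h =>
      obtain ⟨m, hp, hq⟩ := ih h
      exact ⟨m, .cons e hp, hq⟩

lemma exists_split_of_mem_verts {x y u : G.V} {p : List G.E} (h : G.Path x y p)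
    (hu : u ∈ G.verts x p) : ∃ a b, p = a ++ b ∧ G.Path x u a ∧ G.Path u y b := by
  induction h with
  | nil x =>
    obtain rfl : u = x := by simpa [verts] using hu
    exact ⟨[], [], rfl, .nil u, .nil u⟩
  | cons e h ih =>
    rw [verts_cons, List.mem_cons] at hu
    rcases hu with rfl | hu
    · exact ⟨[], _, rfl, .nil _, .cons e h⟩
    · obtain ⟨a, b, rfl, ha, hb⟩ := ih hu
      exact ⟨e :: a, b, rfl, .cons e ha, hb⟩

lemma exists_shortcut_of_not_nodup {x y : G.V} {p : List G.E} (h : G.Path x y p)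
    (hp : ¬(G.verts x p).Nodup) :
    ∃ m a b c, p = a ++ b ++ c ∧ b ≠ [] ∧ G.Path x m a ∧ G.Path m y c := by
  induction h with
  | nil x => simp [verts] at hp
  | cons e h ih =>
    rw [verts_cons, List.nodup_cons, not_and_or, not_not] at hp
    rcases hp with hmem | hp
    · obtain ⟨a, b, rfl, -, hb⟩ := h.exists_split_of_mem_verts hmem
      exact ⟨_, [], e :: a, b, rfl, List.cons_ne_nil e a, .nil _, hb⟩
    · obtain ⟨m, a, b, c, rfl, hb, ha, hc⟩ := ih hp
      exact ⟨m, e :: a, b, c, rfl, hb, .cons e ha, hc⟩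

lemma exists_mem_τ_eq {x y : G.V} {p : List G.E} (h : G.Path x y p) (hp : p ≠ []) :
    ∃ e ∈ p, G.τ e = y := by
  induction h with
  | nil => contradiction
  | @cons e _ p h ih =>
    rcases eq_or_ne p [] with rfl | hp
    · exact ⟨e, List.mem_cons_self, h.eq_of_nil⟩
    · obtain ⟨g, hg, rfl⟩ := ih hp
      exact ⟨g, List.mem_cons_of_mem e hg, rfl⟩

lemma reach_of_mem {x y : G.V} {p : List G.E} (h : G.Path x y p) {e : G.E} (he : e ∈ p) :
    G.Reach x (G.ι e) ∧ G.Reach (G.τ e) y := by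
  obtain ⟨a, b, rfl⟩ := List.append_of_mem he
  obtain ⟨m, ha, hb⟩ := h.of_append
  cases hb with
  | cons _ hb => exact ⟨⟨a, ha⟩, ⟨b, hb⟩⟩

end Path

lemma Reach.refl (x : G.V) : G.Reach x x := ⟨[], .nil x⟩

lemma Reach.trans {x y z : G.V} (h₁ : G.Reach x y) (h₂ : G.Reach y z) : G.Reach x z := by
  obtain ⟨p, hp⟩ := h₁
  obtain ⟨q, hq⟩ := h₂
  exact ⟨p ++ q, hp.append hq⟩

lemma reach_ι_τ (e : G.E) : G.Reach (G.ι e) (G.τ e) := ⟨[e], .cons e (.nil _)⟩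

def strongComponent (G : DGraph) (c : G.V) : Set G.V := {u | G.Reach u c ∧ G.Reach c u}

section StrongComponent

variable {c : G.V}

lemma reach_of_mem_strongComponent {x y : G.V} (hx : x ∈ G.strongComponent c)
    (hy : y ∈ G.strongComponent c) : G.Reach x y :=
  hx.1.trans hy.2

lemma endpoints_mem_strongComponent {x y : G.V} {W : List G.E} (hW : G.Path x y W)
    (hyx : G.Reach y x) (hx : x ∈ G.strongComponent c) {e : G.E} (he : e ∈ W) :
    G.ι e ∈ G.strongComponent c ∧ G.τ e ∈ G.strongComponent c := by
  obtain ⟨hxι, hτy⟩ := hW.reach_of_mem he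
  have hτc : G.Reach (G.τ e) c := hτy.trans (hyx.trans hx.1)
  have hcι : G.Reach c (G.ι e) := hx.2.trans hxι
  exact ⟨⟨(reach_ι_τ e).trans hτc, hcι⟩, ⟨hτc, hcι.trans (reach_ι_τ e)⟩⟩

lemma exists_edge_into_of_mem_strongComponent
    (hedge : ∃ e, G.ι e ∈ G.strongComponent c ∧ G.τ e ∈ G.strongComponent c) {u : G.V}
    (hu : u ∈ G.strongComponent c) :
    ∃ g, G.ι g ∈ G.strongComponent c ∧ G.τ g ∈ G.strongComponent c ∧ G.τ g = u := by
  obtain ⟨e, heι, heτ⟩ := hedge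
  obtain ⟨q₁, hq₁⟩ := reach_of_mem_strongComponent hu heι
  obtain ⟨q₂, hq₂⟩ := reach_of_mem_strongComponent heτ hu
  have hW : G.Path u u (q₁ ++ e :: q₂) := hq₁.append (.cons e hq₂)
  obtain ⟨g, hg, rfl⟩ := hW.exists_mem_τ_eq (by simp)
  obtain ⟨hgι, hgτ⟩ := endpoints_mem_strongComponent hW (.refl _) hu hg
  exact ⟨g, hgι, hgτ, rfl⟩

end StrongComponent

def SimplePathsUnique (G : DGraph) (v : G.V) : Prop :=
  ∀ w p q, G.SimplePath v w p → G.SimplePath v w q → p = q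

section SpanningTree

variable {v : G.V} {ES : Set G.E} (hT : G.IsSpanningTree v ES)

noncomputable def treePath (w : G.V) : List G.E := (hT.2.2 w trivial).choose

lemma pathIn_treePath (w : G.V) : G.PathIn ES v w (treePath hT w) :=
  (hT.2.2 w trivial).choose_spec.1

lemma eq_treePath {w : G.V} {p : List G.E} (h : G.PathIn ES v w p) : p = treePath hT w :=
  (hT.2.2 w trivial).choose_spec.2 p h

lemma eq_treePath_of_prefix {w m : G.V} {a b : List G.E} (h : treePath hT w = a ++ b)
    (ha : G.Path v m a) : a = treePath hT m :=
  eq_treePath hT ⟨ha, fun e he => (pathIn_treePath hT w).2 e (h ▸ List.mem_append_left b he)⟩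

lemma nodup_verts_treePath (w : G.V) : (G.verts v (treePath hT w)).Nodup := by
  by_contra hdup
  have hw := pathIn_treePath hT w
  obtain ⟨m, a, b, c, hsplit, hb, ha, hc⟩ := hw.1.exists_shortcut_of_not_nodup hdup
  have hac : a ++ c = treePath hT w := by
    refine eq_treePath hT ⟨ha.append hc, fun e he => hw.2 e ?_⟩
    rw [hsplit]
    simp only [List.mem_append] at he ⊢
    tauto
  have hlen := congrArg List.length (hac.trans hsplit)
  simp only [List.length_append] at hlen
  exact hb (List.eq_nil_of_length_eq_zero (by omega))

lemma treePath_τ_of_mem {e : G.E} (he : e ∈ ES) :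
    treePath hT (G.τ e) = treePath hT (G.ι e) ++ [e] := by
  refine (eq_treePath hT ⟨(pathIn_treePath hT _).1.append (.cons e (.nil _)), ?_⟩).symm
  simp only [List.mem_append, List.mem_singleton]
  rintro f (hf | rfl)
  exacts [(pathIn_treePath hT _).2 f hf, he]

lemma not_mem_treePath_ι {f : G.E} (hf : f ∈ ES) : f ∉ treePath hT (G.ι f) := by
  intro hmem
  have hnd := nodup_verts_treePath hT (G.τ f)
  rw [treePath_τ_of_mem hT hf, verts_append, List.map_singleton, ← List.concat_eq_append,
    List.nodup_concat] at hnd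
  exact hnd.1 (List.mem_cons_of_mem _ (List.mem_map_of_mem hmem))

lemma exists_geodesic_of_not_mem (huniq : G.SimplePathsUnique v) {e : G.E} (he : e ∉ ES) :
    ∃ p, G.PathIn ES (G.τ e) (G.ι e) p ∧
      treePath hT (G.ι e) = treePath hT (G.τ e) ++ p := by
  have hι := pathIn_treePath hT (G.ι e)
  have hτ : G.τ e ∈ G.verts v (treePath hT (G.ι e)) := by
    by_contra hτ
    have hsimple : G.SimplePath v (G.τ e) (treePath hT (G.ι e) ++ [e]) := by
      refine ⟨hι.1.append (.cons e (.nil _)), ?_⟩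
      rw [verts_append, List.map_singleton, ← List.concat_eq_append]
      exact (nodup_verts_treePath hT _).concat hτ
    have heq := huniq _ _ _ hsimple ⟨(pathIn_treePath hT _).1, nodup_verts_treePath hT _⟩
    exact he ((pathIn_treePath hT (G.τ e)).2 e (heq ▸ by simp))
  obtain ⟨a, b, hsplit, ha, hb⟩ := hι.1.exists_split_of_mem_verts hτ
  refine ⟨b, ⟨hb, fun f hf => hι.2 f (hsplit ▸ List.mem_append_right a hf)⟩, ?_⟩
  rw [hsplit, ← eq_treePath_of_prefix hT hsplit ha]

lemma exists_bold_geodesic_mem_of_path (huniq : G.SimplePathsUnique v)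
    {f : G.E} {x y : G.V} {W : List G.E} (hW : G.Path x y W) (hx : f ∈ treePath hT x)
    (hy : f ∉ treePath hT y) :
    ∃ e ∈ W, e ∉ ES ∧ ∃ p, G.PathIn ES (G.τ e) (G.ι e) p ∧ f ∈ p := by
  induction hW with
  | nil => exact absurd hx hy
  | cons e _ ih =>
    by_cases he : e ∈ ES
    · have hx' : f ∈ treePath hT (G.τ e) := by
        rw [treePath_τ_of_mem hT he]
        exact List.mem_append_left _ hx
      obtain ⟨e', he', hloop⟩ := ih hx' hy
      exact ⟨e', List.mem_cons_of_mem e he', hloop⟩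
    · obtain ⟨p, hp, hsplit⟩ := exists_geodesic_of_not_mem hT huniq he
      rw [hsplit, List.mem_append] at hx
      rcases hx with hx | hx
      · obtain ⟨e', he', hloop⟩ := ih hx hy
        exact ⟨e', List.mem_cons_of_mem e he', hloop⟩
      · exact ⟨e, List.mem_cons_self, he, p, hp, hx⟩

lemma exists_loop_of_endpoints_mem_strongComponent (hT : G.IsSpanningTree v ES)
    (huniq : G.SimplePathsUnique v) {c : G.V} {f : G.E}
    (hfι : G.ι f ∈ G.strongComponent c) (hfτ : G.τ f ∈ G.strongComponent c) :
    ∃ e, e ∉ ES ∧ G.ι e ∈ G.strongComponent c ∧ G.τ e ∈ G.strongComponent c ∧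
      ∃ p, G.PathIn ES (G.τ e) (G.ι e) p ∧ (f = e ∨ f ∈ p) := by
  by_cases hf : f ∈ ES
  · obtain ⟨W, hW⟩ := reach_of_mem_strongComponent hfτ hfι
    obtain ⟨e, heW, he, p, hp, hfp⟩ := exists_bold_geodesic_mem_of_path hT huniq hW
      (by simp [treePath_τ_of_mem hT hf]) (not_mem_treePath_ι hT hf)
    obtain ⟨heι, heτ⟩ := endpoints_mem_strongComponent hW (reach_ι_τ f) hfτ heW
    exact ⟨e, he, heι, heτ, p, hp, .inr hfp⟩
  · obtain ⟨p, hp, -⟩ := exists_geodesic_of_not_mem hT huniq hf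
    exact ⟨f, hf, hfι, hfτ, p, hp, .inl rfl⟩

end SpanningTree

theorem strong_component_eq_union_loops_general (G : DGraph) (v : G.V)
    (huspp : ∀ w : G.V, ∃! p : List G.E, G.SimplePath v w p)
    (ES : Set G.E) (hT : G.IsSpanningTree v ES)
    (c : G.V) (C : Set G.V) (hC : C = {u : G.V | G.Reach u c ∧ G.Reach c u})
    (hedge : ∃ e : G.E, G.ι e ∈ C ∧ G.τ e ∈ C) :
    (∀ u ∈ C, ∃ e : G.E, e ∉ ES ∧ G.ι e ∈ C ∧ G.τ e ∈ C ∧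
        ∃ p : List G.E, G.PathIn ES (G.τ e) (G.ι e) p ∧
          u ∈ G.verts (G.τ e) p) ∧
      (∀ f : G.E, G.ι f ∈ C → G.τ f ∈ C →
        ∃ e : G.E, e ∉ ES ∧ G.ι e ∈ C ∧ G.τ e ∈ C ∧
          ∃ p : List G.E, G.PathIn ES (G.τ e) (G.ι e) p ∧
            (f = e ∨ f ∈ p)) := by
  subst hC
  have huniq : G.SimplePathsUnique v := fun w _ _ hp hq => (huspp w).unique hp hq
  refine ⟨fun u hu => ?_, fun f => exists_loop_of_endpoints_mem_strongComponent hT huniq⟩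
  obtain ⟨g, hgι, hgτ, rfl⟩ := exists_edge_into_of_mem_strongComponent hedge hu
  obtain ⟨e, he, heι, heτ, p, hp, hg⟩ :=
    exists_loop_of_endpoints_mem_strongComponent hT huniq hgι hgτ
  refine ⟨e, he, heι, heτ, p, hp, ?_⟩
  rcases hg with rfl | hg
  · exact List.mem_cons_self
  · exact List.mem_cons_of_mem _ (List.mem_map_of_mem hg)

/-- Let `(Γ, v)` have the unique simple path property with spanning tree `T`
(edge set `ES`), and let `C` be a strongly connected component containing at
least one edge.  Then `C` is the union of the loops `lp(e) = [τ(e), ι(e)]·e`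
over the bold arrows `e` (edges outside `T`) contained in `C`: every vertex of
`C` lies on such a loop, and every edge of `C` belongs to such a loop. -/
theorem strong_component_eq_union_loops (G : DGraph) (v : G.V)
    (hroot : G.Rooted v)
    (huspp : ∀ w : G.V, ∃! p : List G.E, G.SimplePath v w p)
    (ES : Set G.E) (hT : G.IsSpanningTree v ES)
    (c : G.V) (C : Set G.V) (hC : C = {u : G.V | G.Reach u c ∧ G.Reach c u})
    (hedge : ∃ e : G.E, G.ι e ∈ C ∧ G.τ e ∈ C) :
    (∀ u ∈ C, ∃ e : G.E, e ∉ ES ∧ G.ι e ∈ C ∧ G.τ e ∈ C ∧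
        ∃ p : List G.E, G.PathIn ES (G.τ e) (G.ι e) p ∧
          u ∈ G.verts (G.τ e) p) ∧
      (∀ f : G.E, G.ι f ∈ C → G.τ f ∈ C →
        ∃ e : G.E, e ∉ ES ∧ G.ι e ∈ C ∧ G.τ e ∈ C ∧
          ∃ p : List G.E, G.PathIn ES (G.τ e) (G.ι e) p ∧
            (f = e ∨ f ∈ p)) :=
  strong_component_eq_union_loops_general G v huspp ES hT c C hC hedge

end DGraph
end

section
/- Let (Δ, v) be a rooted directed graph and let cut(Δ, v) be the graph obtained by detaching every edge ending at v so that it ends instead at a new distinct vertex. Then cut(Δ, v) is rooted at v, and (cut(Δ, v), v) has the unique simple path property if and only if (Δ, v) does. -/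
namespace DGraph

open scoped Classical in
/-- The cut of a rooted graph at `v`: every edge ending at `v` is detached so
that it ends instead at its own new vertex. -/
noncomputable def Cut (G : DGraph) (v : G.V) : DGraph where
  V := G.V ⊕ {e : G.E // G.τ e = v}
  E := G.E
  ι := fun e => Sum.inl (G.ι e)
  τ := fun e =>
    if h : G.τ e = v then Sum.inr ⟨e, h⟩ else Sum.inl (G.τ e)

theorem _root_.Function.Injective.existsUnique_exists_eq_and {α β : Type*} {f : α → β}
    (hf : Function.Injective f) {P : α → Prop} :
    (∃! b, ∃ a, b = f a ∧ P a) ↔ ∃! a, P a := by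
  constructor
  · rintro ⟨_, ⟨a, rfl, ha⟩, huniq⟩
    exact ⟨a, ha, fun a' ha' => hf (huniq _ ⟨a', rfl, ha'⟩)⟩
  · rintro ⟨a, ha, huniq⟩
    refine ⟨f a, ⟨a, rfl, ha⟩, ?_⟩
    rintro _ ⟨a', rfl, ha'⟩
    rw [huniq a' ha']

variable {G : DGraph} {v : G.V}

theorem Path.append_s15 {u w x : G.V} {p q : List G.E} (hp : G.Path u w p) (hq : G.Path w x q) :
    G.Path u x (p ++ q) := by
  induction hp with
  | nil => exact hq
  | cons e _ ih => exact .cons e (ih hq)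

theorem verts_append_singleton (u : G.V) (p : List G.E) (e : G.E) :
    G.verts u (p ++ [e]) = G.verts u p ++ [G.τ e] := by
  simp [verts]

theorem τ_ne_of_verts_nodup {p : List G.E} (hnd : (G.verts v p).Nodup) :
    ∀ e ∈ p, G.τ e ≠ v := by
  rintro e he rfl
  exact (List.nodup_cons.mp hnd).1 (List.mem_map_of_mem he)

/-- Either `p` never enters `v`, or its part after the last visit of `v` does not. -/
theorem Path.exists_avoiding {a u : G.V} {p : List G.E} (hp : G.Path a u p) (hu : u ≠ v) :
    ∃ q, (G.Path a u q ∨ G.Path v u q) ∧ ∀ e ∈ q, G.τ e ≠ v := by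
  induction hp with
  | nil => exact ⟨[], .inl (.nil _), by simp⟩
  | cons e hp ih =>
    obtain ⟨q, hq | hq, hav⟩ := ih hu
    · by_cases he : G.τ e = v
      · exact ⟨q, .inr (he ▸ hq), hav⟩
      · refine ⟨e :: q, .inl (.cons e hq), ?_⟩
        simpa [he] using hav
    · exact ⟨q, .inr hq, hav⟩

theorem Reach.exists_avoiding {u : G.V} (h : G.Reach v u) (hu : u ≠ v) :
    ∃ q, G.Path v u q ∧ ∀ e ∈ q, G.τ e ≠ v := by
  obtain ⟨p, hp⟩ := h
  obtain ⟨q, hq, hav⟩ := hp.exists_avoiding hu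
  exact ⟨q, hq.elim id id, hav⟩

namespace Cut

theorem τ_of_ne {e : G.E} (h : G.τ e ≠ v) : (G.Cut v).τ e = .inl (G.τ e) := by
  simp [Cut, h]

theorem τ_of_eq {e : G.E} (h : G.τ e = v) : (G.Cut v).τ e = .inr ⟨e, h⟩ := by
  simp [Cut, h]

theorem path_single (s : {e : G.E // G.τ e = v}) :
    (G.Cut v).Path (.inl (G.ι s.1)) (.inr s) [s.1] := by
  have h := Path.cons (G := G.Cut v) s.1 (.nil _)
  rwa [τ_of_eq s.2] at h

theorem path_of_inr {s : {e : G.E // G.τ e = v}} {x : (G.Cut v).V} {p : List G.E}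
    (hp : (G.Cut v).Path (.inr s) x p) : p = [] ∧ x = .inr s := by
  match hp with
  | .nil _ => exact ⟨rfl, rfl⟩

theorem _root_.DGraph.Path.toCut {u w : G.V} {p : List G.E} (hp : G.Path u w p)
    (hav : ∀ e ∈ p, G.τ e ≠ v) : (G.Cut v).Path (.inl u) (.inl w) p := by
  induction hp with
  | nil => exact .nil _
  | cons e _ ih =>
    simp only [List.mem_cons, forall_eq_or_imp] at hav
    have h := ih hav.2
    rw [← τ_of_ne hav.1] at h
    exact Path.cons (G := G.Cut v) e h

theorem path_inl_inl_iff {u w : G.V} {p : List G.E} :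
    (G.Cut v).Path (.inl u) (.inl w) p ↔ G.Path u w p ∧ ∀ e ∈ p, G.τ e ≠ v := by
  refine ⟨fun hp => ?_, fun ⟨hp, hav⟩ => hp.toCut hav⟩
  induction p generalizing u with
  | nil =>
    match hp with
    | .nil _ => exact ⟨.nil _, by simp⟩
  | cons e p ih =>
    match hp with
    | .cons _ hp =>
      by_cases he : G.τ e = v
      · rw [τ_of_eq he] at hp
        exact absurd (path_of_inr hp).2 Sum.inl_ne_inr
      · rw [τ_of_ne he] at hp
        obtain ⟨hp, hav⟩ := ih hp
        exact ⟨.cons e hp, by simpa [he] using hav⟩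

theorem path_inl_inr_iff {u : G.V} {s : {e : G.E // G.τ e = v}} {p : List G.E} :
    (G.Cut v).Path (.inl u) (.inr s) p ↔
      ∃ q, p = q ++ [s.1] ∧ G.Path u (G.ι s.1) q ∧ ∀ e ∈ q, G.τ e ≠ v := by
  refine ⟨fun hp => ?_, fun ⟨q, hpq, hq, hav⟩ => hpq ▸ (hq.toCut hav).append_s15 (path_single s)⟩
  induction p generalizing u with
  | nil => nomatch hp
  | cons e p ih =>
    match hp with
    | .cons _ hp =>
      by_cases he : G.τ e = v
      · rw [τ_of_eq he] at hp
        obtain ⟨rfl, hs⟩ := path_of_inr hp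
        cases hs
        exact ⟨[], rfl, .nil _, by simp⟩
      · rw [τ_of_ne he] at hp
        obtain ⟨q, rfl, hq, hav⟩ := ih hp
        exact ⟨e :: q, rfl, .cons e hq, by simpa [he] using hav⟩

theorem verts_eq_map_inl {u : G.V} {p : List G.E} (hav : ∀ e ∈ p, G.τ e ≠ v) :
    (G.Cut v).verts (.inl u) p = (G.verts u p).map .inl := by
  simp only [verts]
  exact congrArg _ ((List.map_congr_left fun e he => τ_of_ne (hav e he)).trans List.map_map.symm)

theorem verts_append_singleton_eq {u : G.V} {q : List G.E} (hav : ∀ e ∈ q, G.τ e ≠ v)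
    (s : {e : G.E // G.τ e = v}) :
    (G.Cut v).verts (.inl u) (q ++ [s.1]) = (G.verts u q).map .inl ++ [.inr s] := by
  rw [← τ_of_eq s.2, ← verts_eq_map_inl hav]
  exact verts_append_singleton (G := G.Cut v) _ _ _

theorem simplePath_inl_inl_iff {w : G.V} {p : List G.E} :
    (G.Cut v).SimplePath (.inl v) (.inl w) p ↔ G.SimplePath v w p := by
  constructor
  · rintro ⟨hp, hnd⟩
    obtain ⟨hp, hav⟩ := path_inl_inl_iff.mp hp
    rw [verts_eq_map_inl hav] at hnd
    exact ⟨hp, hnd.of_map _⟩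
  · rintro ⟨hp, hnd⟩
    have hav := τ_ne_of_verts_nodup hnd
    refine ⟨hp.toCut hav, ?_⟩
    rw [verts_eq_map_inl hav]
    exact hnd.map Sum.inl_injective

theorem simplePath_inl_inr_iff {s : {e : G.E // G.τ e = v}} {p : List G.E} :
    (G.Cut v).SimplePath (.inl v) (.inr s) p ↔
      ∃ q, p = q ++ [s.1] ∧ G.SimplePath v (G.ι s.1) q := by
  have hverts {q : List G.E} (hav : ∀ e ∈ q, G.τ e ≠ v) :
      ((G.Cut v).verts (.inl v) (q ++ [s.1])).Nodup ↔ (G.verts v q).Nodup := by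
    rw [verts_append_singleton_eq hav, List.nodup_append]
    refine ⟨fun h => h.1.of_map _, fun h => ⟨h.map Sum.inl_injective, List.nodup_singleton _, ?_⟩⟩
    rintro _ hx _ hy rfl
    obtain ⟨y, -, hy'⟩ := List.mem_map.mp hx
    exact Sum.inl_ne_inr (hy'.trans (List.mem_singleton.mp hy))
  constructor
  · rintro ⟨hp, hnd⟩
    obtain ⟨q, rfl, hq, hav⟩ := path_inl_inr_iff.mp hp
    exact ⟨q, rfl, hq, (hverts hav).mp hnd⟩
  · rintro ⟨q, rfl, hq, hnd⟩
    have hav := τ_ne_of_verts_nodup hnd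
    exact ⟨path_inl_inr_iff.mpr ⟨q, rfl, hq, hav⟩, (hverts hav).mpr hnd⟩

end Cut

def UniqueSimplePathProperty (G : DGraph) (v : G.V) : Prop :=
  ∀ w, ∃! p, G.SimplePath v w p

theorem Cut.uniqueSimplePathProperty_iff :
    (G.Cut v).UniqueSimplePathProperty (.inl v) ↔ G.UniqueSimplePathProperty v := by
  have h_inl (w : G.V) : (∃! p, (G.Cut v).SimplePath (.inl v) (.inl w) p) ↔
      ∃! p, G.SimplePath v w p :=
    existsUnique_congr fun _ => simplePath_inl_inl_iff
  have h_inr (s : {e : G.E // G.τ e = v}) : (∃! p, (G.Cut v).SimplePath (.inl v) (.inr s) p) ↔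
      ∃! q, G.SimplePath v (G.ι s.1) q :=
    (existsUnique_congr fun _ => simplePath_inl_inr_iff).trans
      (List.append_left_injective _).existsUnique_exists_eq_and
  constructor
  · exact fun H w => (h_inl w).mp (H (.inl w))
  · rintro H (w | s)
    · exact (h_inl w).mpr (H w)
    · exact (h_inr s).mpr (H _)

theorem Rooted.cut (hroot : G.Rooted v) : (G.Cut v).Rooted (.inl v) := by
  have reach_inl (u : G.V) : (G.Cut v).Reach (.inl v) (.inl u) := by
    by_cases hu : u = v
    · exact hu ▸ ⟨[], .nil _⟩
    · obtain ⟨q, hq, hav⟩ := (hroot u).exists_avoiding hu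
      exact ⟨q, hq.toCut hav⟩
  rintro (u | s)
  · exact reach_inl u
  · obtain ⟨p, hp⟩ := reach_inl (G.ι s.1)
    exact ⟨_, hp.append_s15 (Cut.path_single s)⟩

/-- The cut graph `cut(Δ, v)` is rooted at `v`, and it has the unique simple
path property at `v` if and only if `(Δ, v)` does. -/
theorem cut_rooted_and_uspp_iff (G : DGraph) (v : G.V) (hroot : G.Rooted v) :
    (G.Cut v).Rooted (Sum.inl v) ∧
      ((∀ w : (G.Cut v).V, ∃! p : List (G.Cut v).E,
          (G.Cut v).SimplePath (Sum.inl v) w p) ↔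
        (∀ w : G.V, ∃! p : List G.E, G.SimplePath v w p)) := by
  exact ⟨hroot.cut, Cut.uniqueSimplePathProperty_iff⟩

end DGraph
end
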